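/- Let Ω ⊆ ℝ^d be open, let the Lagrangian L : ℝ^d × ℝ × ℝ^d → ℝ be twice continuously differentiable, let u ∈ C²(Ω), ξ ∈ C¹(Ω; ℝ^d), φ ∈ C¹(Ω), and set Q := φ − ξ·∇u. If the infinitesimal invariance identity ∇Q · L_p(·,u,∇u) + Q · L_u(·,u,∇u) + div(L(·,u,∇u) ξ) = 0 holds at every point of Ω, then at every point of Ω one has Q · 𝓛[u] + div( Q L_p(·,u,∇u) + L(·,u,∇u) ξ ) = 0; that is, the divergence of the Noether current C[u] := L(·,u,∇u) ξ + (φ − ξ·∇u) L_p(·,u,∇u) equals −Q 𝓛[u] pointwise on Ω. -/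

import Mathlib

/-!
By the product rule, `div (Q L_p) = ∇Q · L_p + Q div L_p`, so
`Q 𝓛[u] + div (Q L_p + L ξ)` is literally the left-hand side of the infinitesimal invariance
identity. The only analytic input is that `Q`, `L_p(·,u,∇u)`, `L(·,u,∇u)` and `ξ` are
differentiable on `Ω`; for the two Lagrangian terms this needs `L ∈ C²` and `u ∈ C²`, since
`L_p` already involves one derivative of `L` and the jet `x ↦ (x, u x, ∇u x)` one of `∇u`.
-/

open MeasureTheory RealInnerProductSpace
open scoped BigOperators

noncomputable section

/-- `ℝ^d` as a Euclidean (inner product) space. -/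
abbrev Euc (d : ℕ) := EuclideanSpace ℝ (Fin d)

/-- Divergence of a vector field on `ℝ^d`. -/
noncomputable def pdiv {d : ℕ} (F : Euc d → Euc d) (x : Euc d) : ℝ :=
  ∑ i, fderiv ℝ F x (EuclideanSpace.single i 1) i

/-- `x ↦ L(x, u(x), ∇u(x))`, the Lagrangian evaluated along `u`. -/
noncomputable def lagAlong {d : ℕ} (L : Euc d → ℝ → Euc d → ℝ) (u : Euc d → ℝ)
    (x : Euc d) : ℝ :=
  L x (u x) (gradient u x)

/-- `L_u(x, u(x), ∇u(x))`, the partial derivative of `L` in its second argument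
evaluated along `u`. -/
noncomputable def lagU {d : ℕ} (L : Euc d → ℝ → Euc d → ℝ) (u : Euc d → ℝ)
    (x : Euc d) : ℝ :=
  deriv (fun s => L x s (gradient u x)) (u x)

/-- `L_p(x, u(x), ∇u(x))`, the gradient of `L` in its third argument
evaluated along `u`. -/
noncomputable def lagP {d : ℕ} (L : Euc d → ℝ → Euc d → ℝ) (u : Euc d → ℝ)
    (x : Euc d) : Euc d :=
  gradient (fun p => L x (u x) p) (gradient u x)

open InnerProductSpace ContinuousLinearMap

section Gradient

variable {E : Type*} [NormedAddCommGroup E] [InnerProductSpace ℝ E] [CompleteSpace E]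

theorem ContDiffAt.gradient {f : E → ℝ} {x : E} {m n : WithTop ℕ∞}
    (hf : ContDiffAt ℝ n f x) (hmn : m + 1 ≤ n) : ContDiffAt ℝ m (gradient f) x :=
  (toDual ℝ E).symm.contDiff.contDiffAt.comp x (hf.fderiv_right hmn)

variable {A B : Type*} [NormedAddCommGroup A] [NormedSpace ℝ A]
  [NormedAddCommGroup B] [NormedSpace ℝ B]

theorem gradient_last_eq {F : A × B × E → ℝ} {a : A} {b : B} {p : E}
    (hF : DifferentiableAt ℝ F (a, b, p)) :
    gradient (fun p => F (a, b, p)) p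
      = (toDual ℝ E).symm ((fderiv ℝ F (a, b, p)).comp ((inr ℝ A (B × E)).comp (inr ℝ B E))) :=
  congrArg (toDual ℝ E).symm
    (hF.hasFDerivAt.comp p
      ((hasFDerivAt_prodMk_right a (b, p)).comp p (hasFDerivAt_prodMk_right b p))).fderiv

theorem ContDiff.gradient_last {F : A × B × E → ℝ} {n : WithTop ℕ∞}
    (hF : ContDiff ℝ (n + 1) F) :
    ContDiff ℝ n (fun q : A × B × E => gradient (fun p => F (q.1, q.2.1, p)) q.2.2) := by
  simp_rw [gradient_last_eq (hF.differentiable (by simp) _)]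
  exact (toDual ℝ E).symm.contDiff.comp ((hF.fderiv_right le_rfl).clm_comp contDiff_const)

theorem contDiffAt_jet {u : E → ℝ} {x : E} {n : WithTop ℕ∞} (hu : ContDiffAt ℝ (n + 1) u x) :
    ContDiffAt ℝ n (fun y => (y, u y, gradient u y)) x :=
  contDiffAt_id.prodMk ((hu.of_le le_self_add).prodMk (hu.gradient le_rfl))

end Gradient

theorem EuclideanSpace.gradient_apply {ι : Type*} [Fintype ι] [DecidableEq ι]
    (f : EuclideanSpace ℝ ι → ℝ) (x : EuclideanSpace ℝ ι) (i : ι) :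
    gradient f x i = fderiv ℝ f x (EuclideanSpace.single i 1) := by
  rw [← inner_gradient_left, EuclideanSpace.inner_single_right]
  simp

theorem pdiv_add {d : ℕ} {F G : Euc d → Euc d} {x : Euc d}
    (hF : DifferentiableAt ℝ F x) (hG : DifferentiableAt ℝ G x) :
    pdiv (fun y => F y + G y) x = pdiv F x + pdiv G x := by
  simp [pdiv, fderiv_fun_add hF hG, Finset.sum_add_distrib]

theorem pdiv_smul {d : ℕ} {f : Euc d → ℝ} {V : Euc d → Euc d} {x : Euc d}
    (hf : DifferentiableAt ℝ f x) (hV : DifferentiableAt ℝ V x) :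
    pdiv (fun y => f y • V y) x = ⟪gradient f x, V x⟫ + f x * pdiv V x := by
  have hinner : ⟪gradient f x, V x⟫ = ∑ i, fderiv ℝ f x (EuclideanSpace.single i 1) * V x i := by
    simp only [PiLp.inner_apply, RCLike.inner_apply, conj_trivial, EuclideanSpace.gradient_apply,
      mul_comm]
  rw [hinner]
  simp [pdiv, fderiv_fun_smul hf hV, Finset.sum_add_distrib, Finset.mul_sum, add_comm]

theorem contDiffAt_lagAlong {d : ℕ} {n : WithTop ℕ∞} {L : Euc d → ℝ → Euc d → ℝ}
    (hL : ContDiff ℝ n (fun q : Euc d × ℝ × Euc d => L q.1 q.2.1 q.2.2))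
    {u : Euc d → ℝ} {x : Euc d} (hu : ContDiffAt ℝ (n + 1) u x) :
    ContDiffAt ℝ n (lagAlong L u) x :=
  hL.contDiffAt.comp x (contDiffAt_jet hu)

theorem contDiffAt_lagP {d : ℕ} {n : WithTop ℕ∞} {L : Euc d → ℝ → Euc d → ℝ}
    (hL : ContDiff ℝ (n + 1) (fun q : Euc d × ℝ × Euc d => L q.1 q.2.1 q.2.2))
    {u : Euc d → ℝ} {x : Euc d} (hu : ContDiffAt ℝ (n + 1) u x) :
    ContDiffAt ℝ n (lagP L u) x :=
  hL.gradient_last.contDiffAt.comp x (contDiffAt_jet hu)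

/-- Noether's identity `div C[u] = Q·𝓛[u]`, pointwise form:
if the infinitesimal invariance identity holds on the open set `Ω`, then
`Q·𝓛[u] + div(Q L_p + L ξ) = 0` pointwise on `Ω`. -/
theorem noether_divergence_identity {d : ℕ} (Ω : Set (Euc d)) (hΩ : IsOpen Ω)
    (L : Euc d → ℝ → Euc d → ℝ)
    (hL : ContDiff ℝ 2 (fun q : Euc d × ℝ × Euc d => L q.1 q.2.1 q.2.2))
    (u : Euc d → ℝ) (hu : ContDiffOn ℝ 2 u Ω)
    (ξ : Euc d → Euc d) (hξ : ContDiffOn ℝ 1 ξ Ω)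
    (φ : Euc d → ℝ) (hφ : ContDiffOn ℝ 1 φ Ω)
    (Q : Euc d → ℝ) (hQ : ∀ x, Q x = φ x - ⟪ξ x, gradient u x⟫)
    (hinv : ∀ x ∈ Ω,
      ⟪gradient Q x, lagP L u x⟫ + Q x * lagU L u x
        + pdiv (fun y => lagAlong L u y • ξ y) x = 0) :
    ∀ x ∈ Ω,
      Q x * (-(pdiv (lagP L u) x) + lagU L u x)
        + pdiv (fun y => Q y • lagP L u y + lagAlong L u y • ξ y) x = 0 := by
  intro x hx
  have hΩx : Ω ∈ nhds x := hΩ.mem_nhds hx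
  have hux : ContDiffAt ℝ 2 u x := hu.contDiffAt hΩx
  have hξx : DifferentiableAt ℝ ξ x := (hξ.contDiffAt hΩx).differentiableAt one_ne_zero
  have hPx : DifferentiableAt ℝ (lagP L u) x :=
    (contDiffAt_lagP (n := 1) hL hux).differentiableAt one_ne_zero
  have hℓx : DifferentiableAt ℝ (lagAlong L u) x :=
    (contDiffAt_lagAlong (n := 1) (hL.of_le one_le_two) hux).differentiableAt one_ne_zero
  have hQx : DifferentiableAt ℝ Q x := by
    rw [funext hQ]
    exact ((hφ.contDiffAt hΩx).differentiableAt one_ne_zero).sub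
      (hξx.inner ℝ ((hux.gradient le_rfl).differentiableAt one_ne_zero))
  rw [pdiv_add (hQx.fun_smul hPx) (hℓx.fun_smul hξx), pdiv_smul hQx hPx]
  linear_combination hinv x hx
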